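/- With a_j = S(j/2), Σ_L = (a_{k-j})_{0≤j,k≤L-1}, and ω(L) = det(I_L - (1/2)Σ_L), ω(0)=1, one has G_1 := 2(ω(3) + ω(1) - 2ω(2)) = 1/4 + 2/π². -/
import Mathlib


noncomputable def S (x : ℝ) : ℝ :=
  if x = 0 then 1 else Real.sin (Real.pi * x) / (Real.pi * x)

/-- The `L × L` symmetric Toeplitz matrix with entries `a_{k-j} = S((k-j)/2)`. -/
noncomputable def SigmaL (L : ℕ) : Matrix (Fin L) (Fin L) ℝ :=
  Matrix.of fun j k => S ((((k : ℤ) - (j : ℤ) : ℤ) : ℝ) / 2)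

noncomputable def ω (L : ℕ) : ℝ := ((1 : Matrix (Fin L) (Fin L) ℝ) - (1/2 : ℝ) • SigmaL L).det

lemma S_zero : S 0 = 1 := by simp [S]

lemma S_half : S (1/2) = 2 / Real.pi := by
  have : Real.pi * (1/2) = Real.pi / 2 := by ring
  simp [S, this, Real.sin_pi_div_two]
  rw [show Real.pi * 2⁻¹ = Real.pi / 2 by ring, Real.sin_pi_div_two, one_div_div]

lemma S_neg_half : S (-(1/2)) = 2 / Real.pi := by
  have h : (-(1/2) : ℝ) ≠ 0 := by norm_num
  have : Real.pi * (-(1/2)) = -(Real.pi / 2) := by ring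
  simp [S, h, this, Real.sin_pi_div_two]
  rw [show Real.pi * 2⁻¹ = Real.pi / 2 by ring, Real.sin_pi_div_two, one_div_div]

lemma S_one : S 1 = 0 := by simp [S]

lemma S_neg_one : S (-1) = 0 := by simp [S]

theorem gap_probability_one :
    2 * (ω 3 + ω 1 - 2 * ω 2) = 1/4 + 2 / Real.pi ^ 2 := by
  have hpi := Real.pi_ne_zero
  have h1 : ω 1 = 1/2 := by
    simp [ω, Matrix.det_fin_one, SigmaL, Matrix.one_apply]
    norm_num [S_zero]
  have h2 : ω 2 = 1/4 - 1 / Real.pi ^ 2 := by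
    simp only [ω, Matrix.det_fin_two, Matrix.sub_apply, Matrix.smul_apply, Matrix.one_apply,
      SigmaL, Matrix.of_apply]
    norm_num [S_zero, S_half, S_neg_half, Fin.ext_iff]
    field_simp
  have h3 : ω 3 = 1/8 - 1 / Real.pi ^ 2 := by
    simp only [ω, Matrix.det_fin_three, Matrix.sub_apply, Matrix.smul_apply, Matrix.one_apply,
      SigmaL, Matrix.of_apply]
    norm_num [S_zero, S_half, S_neg_half, S_one, S_neg_one, Fin.ext_iff]
    field_simp
    ring
  rw [h1, h2, h3]
  field_simp
  ring
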